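/- arXiv:math/0204034 — 3 statements merged into one kernel-verified Lean document; each statement's English description precedes it below -/
import Mathlib

section
/- The operator S on L^2(T) defined by (Sf)(z) = m(z) f(z^N) with m ∈ L^∞(T) is an isometry if and only if (1/N) Σ_{w^N = z} |m(w)|^2 = 1 for almost all z ∈ T. -/
/-!
Write `F z = (1/N) ∑_{w^N = z} |m w|²`. Since `z ↦ z^N` preserves Haar measure and each fiber
`{w | w^N = z^N}` is the translate of the `N`-th roots of unity by `z`, translation invariance gives
`∫ g(z) h(z^N) dμ = ∫ F(z) h(z) dμ` for `g = |m|²`. Hence `‖Sf‖² = ∫ F |f|²`, and testing against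
indicators shows that `S` is isometric exactly when `F = 1` a.e. Measurability of `F` comes from
the measurable section `z ↦ exp(i arg z / N)` of `z ↦ z^N`: it is quasi-measure-preserving because
the `N`-th power of the preimage of a set is covered by `N` translates of that set.
-/

open MeasureTheory ComplexConjugate

noncomputable instance : MeasurableSpace Circle := borel Circle
instance : BorelSpace Circle := ⟨rfl⟩

open Set Function Filter
open scoped ENNReal

lemma setOf_pow_eq_pow_eq_image {G : Type*} [CommGroup G] (N : ℕ) (z : G) :
    {w : G | w ^ N = z ^ N} = (· * z) '' {ζ : G | ζ ^ N = 1} := by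
  ext w
  refine ⟨fun hw => ⟨w / z, by simp_all [div_pow], div_mul_cancel w z⟩, ?_⟩
  rintro ⟨ζ, hζ, rfl⟩
  simp_all [mul_pow]

noncomputable def fiberMean {G : Type*} [Monoid G] (N : ℕ) (g : G → ℝ≥0∞) (z : G) : ℝ≥0∞ :=
  (N : ℝ≥0∞)⁻¹ * ∑ᶠ w ∈ {w : G | w ^ N = z}, g w

lemma fiberMean_pow {G : Type*} [CommGroup G] {N : ℕ} (hK : {ζ : G | ζ ^ N = 1}.Finite)
    (g : G → ℝ≥0∞) (z : G) :
    fiberMean N g (z ^ N) = (N : ℝ≥0∞)⁻¹ * ∑ ζ ∈ hK.toFinset, g (ζ * z) := by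
  rw [fiberMean, setOf_pow_eq_pow_eq_image, finsum_mem_image (mul_left_injective z).injOn,
    finsum_mem_eq_finite_toFinset_sum _ hK]

section Averaging

variable {G : Type*} [CommGroup G] [MeasurableSpace G] [MeasurableMul G] {μ : Measure G}
  [μ.IsMulLeftInvariant] {N : ℕ}

lemma lintegral_mul_left_mul_comp_pow {ζ : G} (hζ : ζ ^ N = 1) (F h : G → ℝ≥0∞) :
    ∫⁻ z, F (ζ * z) * h (z ^ N) ∂μ = ∫⁻ z, F z * h (z ^ N) ∂μ := by
  simpa [mul_pow, hζ] using lintegral_mul_left_eq_self (μ := μ) (fun z => F z * h (z ^ N)) ζ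

lemma lintegral_sum_mul_left_mul_comp_pow {K : Finset G} (hK : ∀ ζ ∈ K, ζ ^ N = 1)
    {F h : G → ℝ≥0∞} (hF : AEMeasurable F μ) (hh : AEMeasurable (fun z => h (z ^ N)) μ) :
    ∫⁻ z, (∑ ζ ∈ K, F (ζ * z)) * h (z ^ N) ∂μ = K.card * ∫⁻ z, F z * h (z ^ N) ∂μ := by
  have hterm (ζ : G) : AEMeasurable (fun z => F (ζ * z) * h (z ^ N)) μ :=
    (hF.comp_quasiMeasurePreserving (measurePreserving_mul_left μ ζ).quasiMeasurePreserving).mul hh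
  simp_rw [Finset.sum_mul]
  rw [lintegral_finsetSum' K fun ζ _ => hterm ζ,
    Finset.sum_congr rfl fun ζ hζ => lintegral_mul_left_mul_comp_pow (hK ζ hζ) F h]
  simp

end Averaging

lemma ENNReal.ofReal_finsum_mem_of_nonneg {α : Type*} {s : Set α} (hs : s.Finite) {f : α → ℝ}
    (hf : ∀ i ∈ s, 0 ≤ f i) : ENNReal.ofReal (∑ᶠ i ∈ s, f i) = ∑ᶠ i ∈ s, ENNReal.ofReal (f i) := by
  rw [finsum_mem_eq_finite_toFinset_sum _ hs, finsum_mem_eq_finite_toFinset_sum _ hs,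
    ENNReal.ofReal_sum_of_nonneg fun i hi => hf i (hs.mem_toFinset.1 hi)]

section L2

variable {α : Type*} [MeasurableSpace α] {μ : Measure α}

lemma MeasureTheory.Lp.norm_eq_norm_iff_lintegral_enorm_sq {E : Type*} [NormedAddCommGroup E]
    (f g : Lp E 2 μ) : ‖f‖ = ‖g‖ ↔ ∫⁻ x, ‖f x‖ₑ ^ 2 ∂μ = ∫⁻ x, ‖g x‖ₑ ^ 2 ∂μ := by
  have h (f : Lp E 2 μ) : ∫⁻ x, ‖f x‖ₑ ^ 2 ∂μ = eLpNorm f 2 μ ^ 2 := by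
    simpa using (eLpNorm_nnreal_pow_eq_lintegral (f := f) (μ := μ) (p := 2) two_ne_zero).symm
  rw [h f, h g, Lp.norm_def, Lp.norm_def, ENNReal.toReal_eq_toReal_iff' (Lp.eLpNorm_ne_top f)
    (Lp.eLpNorm_ne_top g), (ENNReal.pow_right_strictMono two_ne_zero).injective.eq_iff]

lemma ae_eq_one_of_forall_lintegral_mul_enorm_sq {𝕜 : Type*} [RCLike 𝕜] [SigmaFinite μ]
    {A : α → ℝ≥0∞} (hA : AEMeasurable A μ)
    (h : ∀ f : Lp 𝕜 2 μ, ∫⁻ x, A x * ‖f x‖ₑ ^ 2 ∂μ = ∫⁻ x, ‖f x‖ₑ ^ 2 ∂μ) :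
    A =ᵐ[μ] 1 := by
  refine ae_eq_of_forall_setLIntegral_eq_of_sigmaFinite₀ hA aemeasurable_const
    fun s hs hμs => ?_
  have hind : ∀ᵐ x ∂μ, ‖indicatorConstLp 2 hs hμs.ne (1 : 𝕜) x‖ₑ ^ 2 = s.indicator 1 x := by
    filter_upwards [indicatorConstLp_coeFn (p := 2) (hs := hs) (hμs := hμs.ne) (c := (1 : 𝕜))]
      with x hx
    by_cases hxs : x ∈ s <;> simp [hx, hxs]
  have hA_ind : ∀ᵐ x ∂μ, A x * ‖indicatorConstLp 2 hs hμs.ne (1 : 𝕜) x‖ₑ ^ 2 = s.indicator A x :=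
    hind.mono fun x hx => by by_cases hxs : x ∈ s <;> simp [hx, hxs]
  have key := h (indicatorConstLp 2 hs hμs.ne 1)
  rwa [lintegral_congr_ae hA_ind, lintegral_congr_ae hind, lintegral_indicator hs,
    lintegral_indicator hs] at key

end L2

namespace Circle

variable {N : ℕ}

lemma exp_arg_div_pow (hN : N ≠ 0) (z : Circle) : exp (Complex.arg z / N) ^ N = z := by
  rw [← exp_natCast_mul, mul_div_cancel₀ _ (Nat.cast_ne_zero.2 hN), exp_arg]

lemma measurable_exp_arg_div (N : ℕ) : Measurable fun z : Circle => exp (Complex.arg z / N) :=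
  exp.continuous.measurable.comp
    ((Complex.measurable_arg.comp continuous_subtype_val.borel_measurable).div_const _)

lemma ncard_setOf_pow_eq_one (hN : N ≠ 0) : {ζ : Circle | ζ ^ N = 1}.ncard = N := by
  have : NeZero N := ⟨hN⟩
  calc {ζ : Circle | ζ ^ N = 1}.ncard = Nat.card (rootsOfUnity N Circle) :=
        Nat.card_congr (_root_.toUnits.toEquiv.subtypeEquiv fun w => by
          simp [mem_rootsOfUnity, ← Units.val_inj])
    _ = N := HasEnoughRootsOfUnity.natCard_rootsOfUnity Circle N

lemma finite_setOf_pow_eq_one (hN : N ≠ 0) : {ζ : Circle | ζ ^ N = 1}.Finite :=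
  Set.finite_of_ncard_ne_zero (by rw [ncard_setOf_pow_eq_one hN]; exact hN)

lemma finite_setOf_pow_eq (hN : N ≠ 0) (z : Circle) : {w : Circle | w ^ N = z}.Finite := by
  rw [← exp_arg_div_pow hN z, setOf_pow_eq_pow_eq_image]
  exact (finite_setOf_pow_eq_one hN).image _

lemma ofReal_fiberMean (hN : N ≠ 0) (m : Circle → ℂ) (z : Circle) :
    ENNReal.ofReal ((N : ℝ)⁻¹ * ∑ᶠ w ∈ {w : Circle | w ^ N = z}, ‖m w‖ ^ 2)
      = fiberMean N (fun w => ‖m w‖ₑ ^ 2) z := by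
  rw [fiberMean, ENNReal.ofReal_mul (by positivity), ENNReal.ofReal_inv_of_pos (by positivity),
    ENNReal.ofReal_natCast, ENNReal.ofReal_finsum_mem_of_nonneg (finite_setOf_pow_eq hN z)
      fun _ _ => by positivity]
  simp_rw [ENNReal.ofReal_pow (norm_nonneg _), ofReal_norm]

section Haar

variable (μ : Measure Circle) [μ.IsHaarMeasure]

lemma measurePreserving_pow (hN : N ≠ 0) : MeasurePreserving (· ^ N) μ μ :=
  (powMonoidHom N).measurePreserving (continuous_pow N)
    (fun z => ⟨_, exp_arg_div_pow hN z⟩) rfl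

lemma quasiMeasurePreserving_exp_arg_div (hN : N ≠ 0) :
    Measure.QuasiMeasurePreserving (fun z : Circle => exp (Complex.arg z / N)) μ μ := by
  refine ⟨measurable_exp_arg_div N, Measure.AbsolutelyContinuous.mk fun E hE hE0 => ?_⟩
  set s := fun z : Circle => exp (Complex.arg z / N)
  rw [Measure.map_apply (measurable_exp_arg_div N) hE,
    ← (measurePreserving_pow μ hN).measure_preimage (measurable_exp_arg_div N hE).nullMeasurableSet]
  have hcover : (· ^ N) ⁻¹' (s ⁻¹' E) ⊆ ⋃ ζ ∈ {ζ : Circle | ζ ^ N = 1}, (ζ * ·) ⁻¹' E :=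
    fun w hw => mem_biUnion (x := s (w ^ N) / w)
      (by rw [mem_ofPred_eq, div_pow, exp_arg_div_pow hN, div_self']) (by simpa using hw)
  refine measure_mono_null hcover ((measure_biUnion_null_iff
    (finite_setOf_pow_eq_one hN).countable).2 fun ζ _ => ?_)
  rwa [measure_preimage_mul]

lemma aemeasurable_fiberMean (hN : N ≠ 0) {g : Circle → ℝ≥0∞} (hg : AEMeasurable g μ) :
    AEMeasurable (fiberMean N g) μ := by
  have hpow : AEMeasurable (fun z => fiberMean N g (z ^ N)) μ := by
    simp_rw [fiberMean_pow (finite_setOf_pow_eq_one hN)]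
    exact (Finset.aemeasurable_fun_sum _ fun ζ _ => hg.comp_quasiMeasurePreserving
      (measurePreserving_mul_left μ ζ).quasiMeasurePreserving).const_mul _
  refine (hpow.comp_quasiMeasurePreserving (quasiMeasurePreserving_exp_arg_div μ hN)).congr
    (.of_forall fun z => ?_)
  simp only [comp_apply, exp_arg_div_pow hN]

lemma lintegral_fiberMean_mul (hN : N ≠ 0) {g h : Circle → ℝ≥0∞}
    (hg : AEMeasurable g μ) (hh : AEMeasurable h μ) :
    ∫⁻ z, fiberMean N g z * h z ∂μ = ∫⁻ z, g z * h (z ^ N) ∂μ := by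
  have hp := measurePreserving_pow μ hN
  have hK := finite_setOf_pow_eq_one hN
  calc ∫⁻ z, fiberMean N g z * h z ∂μ = ∫⁻ z, fiberMean N g (z ^ N) * h (z ^ N) ∂μ := by
        conv_lhs => rw [← hp.map_eq]
        exact lintegral_map' (by rw [hp.map_eq]; exact (aemeasurable_fiberMean μ hN hg).mul hh)
          hp.aemeasurable
    _ = (N : ℝ≥0∞)⁻¹ * ∫⁻ z, (∑ ζ ∈ hK.toFinset, g (ζ * z)) * h (z ^ N) ∂μ := by
        simp_rw [fiberMean_pow hK, mul_assoc]
        exact lintegral_const_mul' _ _ (by simp [hN])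
    _ = ∫⁻ z, g z * h (z ^ N) ∂μ := by
        rw [lintegral_sum_mul_left_mul_comp_pow (fun ζ => hK.mem_toFinset.1) hg
          (hh.comp_quasiMeasurePreserving hp.quasiMeasurePreserving),
          ← ncard_eq_toFinset_card _ hK, ncard_setOf_pow_eq_one hN, ← mul_assoc,
          ENNReal.inv_mul_cancel (by simp [hN]) (by simp), one_mul]

end Haar

end Circle

theorem isometry_iff_general (N : ℕ) (hN : 2 ≤ N) (μ : Measure Circle) [μ.IsHaarMeasure]
    (m : Circle → ℂ) (hm : MemLp m ⊤ μ)
    (S : Lp ℂ 2 μ →L[ℂ] Lp ℂ 2 μ)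
    (hS : ∀ f : Lp ℂ 2 μ, (S f : Circle → ℂ) =ᵐ[μ] fun z => m z * f (z ^ N)) :
    Isometry S ↔
      (fun z => (N : ℝ)⁻¹ * ∑ᶠ w ∈ {w : Circle | w ^ N = z}, ‖m w‖ ^ 2)
        =ᵐ[μ] fun _ => (1 : ℝ) := by
  have hN0 : N ≠ 0 := by omega
  set A := fiberMean N fun w => ‖m w‖ₑ ^ 2
  have hA : AEMeasurable A μ := Circle.aemeasurable_fiberMean μ hN0 (hm.1.enorm.pow_const 2)
  have hnorm (f : Lp ℂ 2 μ) :
      ‖S f‖ = ‖f‖ ↔ ∫⁻ z, A z * ‖f z‖ₑ ^ 2 ∂μ = ∫⁻ z, ‖f z‖ₑ ^ 2 ∂μ := by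
    rw [Lp.norm_eq_norm_iff_lintegral_enorm_sq, Circle.lintegral_fiberMean_mul μ hN0
      (hm.1.enorm.pow_const 2) ((Lp.aestronglyMeasurable f).enorm.pow_const 2),
      lintegral_congr_ae ((hS f).mono fun z hz => by rw [hz, enorm_mul, mul_pow])]
  have hreal : (fun z => (N : ℝ)⁻¹ * ∑ᶠ w ∈ {w : Circle | w ^ N = z}, ‖m w‖ ^ 2)
      =ᵐ[μ] (fun _ => (1 : ℝ)) ↔ A =ᵐ[μ] 1 :=
    eventually_congr (.of_forall fun z => by
      simp only [A, ← Circle.ofReal_fiberMean hN0 m z, ENNReal.ofReal_eq_one, Pi.one_apply])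
  rw [AddMonoidHomClass.isometry_iff_norm, hreal]
  simp_rw [hnorm]
  exact ⟨ae_eq_one_of_forall_lintegral_mul_enorm_sq hA,
    fun h f => lintegral_congr_ae (h.mono fun z hz => by dsimp only; rw [hz, Pi.one_apply, one_mul])⟩

/-- $Sf(z)=m(z)f(z^N)$ is an isometry of $L^2(\mathbb{T})$ iff
$\frac1N\sum_{w^N=z}|m(w)|^2=1$ a.e. -/
theorem isometry_iff (N : ℕ) (hN : 2 ≤ N) (μ : Measure Circle) [μ.IsHaarMeasure]
    [IsProbabilityMeasure μ] (m : Circle → ℂ) (hm : MemLp m ⊤ μ)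
    (S : Lp ℂ 2 μ →L[ℂ] Lp ℂ 2 μ)
    (hS : ∀ f : Lp ℂ 2 μ, (S f : Circle → ℂ) =ᵐ[μ] fun z => m z * f (z ^ N)) :
    Isometry S ↔
      (fun z => (N : ℝ)⁻¹ * ∑ᶠ w ∈ {w : Circle | w ^ N = z}, ‖m w‖ ^ 2)
        =ᵐ[μ] fun _ => (1 : ℝ) :=
  isometry_iff_general N hN μ m hm S hS
end

section
/- Let S_i f(z) = m_i(z) f(z^N) with m_i(z) = Σ_{j=0}^{N-1} A_{i,j}(z^N) z^j for matrix functions A_{i,j} ∈ L^∞(T). Then for all f ∈ L^2(T), S_i* S_j f(z) = (A A*)_{j,i}(z) f(z), i.e., S_i* S_j is multiplication by the (j,i) entry of the pointwise product A(z) A(z)*. -/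
/-!
Write `S_j f (z) = ∑ₖ zᵏ (A_{jk} f)(z^N)`. The subspaces `{z ↦ zᵏ u(z^N) : u ∈ L²}`, `0 ≤ k < N`,
are mutually orthogonal: rotating `z` by a primitive `N`-th root of unity `ω` fixes `z^N` but
multiplies `conj(zᵏ) zˡ` by `ω^(l-k) ≠ 1`, so cross terms integrate to zero by invariance of Haar
measure. On the diagonal `conj(zᵏ) zᵏ = 1`, and `z ↦ z^N` preserves Haar measure. Hence
`⟪S_j f, S_i h⟫ = ∑ₖ ⟪A_{jk} f, A_{ik} h⟫ = ⟪(A A*)_{ji} f, h⟫`.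
-/

open MeasureTheory ComplexConjugate

theorem Circle.pow_surjective {n : ℕ} (hn : n ≠ 0) :
    Function.Surjective fun z : Circle => z ^ n := fun w =>
  ⟨Circle.exp (Complex.arg w / n), by
    dsimp only
    rw [← Circle.exp_natCast_mul, mul_div_cancel₀ _ (Nat.cast_ne_zero.mpr hn : (n : ℝ) ≠ 0),
      Circle.exp_arg]⟩

theorem Circle.isPrimitiveRoot_exp {n : ℕ} (hn : n ≠ 0) :
    IsPrimitiveRoot (Circle.exp (2 * Real.pi / n)) n := by
  refine IsPrimitiveRoot.of_map_of_injective (f := Circle.coeHom) ?_ Circle.coe_injective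
  convert Complex.isPrimitiveRoot_exp n hn using 2
  change ((Circle.exp _ : Circle) : ℂ) = _
  rw [Circle.coe_exp]
  congr 1
  push_cast
  ring

theorem measurePreserving_pow_of_surjective {G : Type*} [CommGroup G] [TopologicalSpace G]
    [IsTopologicalGroup G] [LocallyCompactSpace G] [MeasurableSpace G] [BorelSpace G]
    (μ : Measure G) [μ.IsHaarMeasure] [IsProbabilityMeasure μ] {n : ℕ}
    (hn : Function.Surjective fun x : G => x ^ n) :
    MeasurePreserving (fun x : G => x ^ n) μ μ := by
  have hcont : Continuous fun x : G => x ^ n := continuous_pow n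
  have : (μ.map fun x : G => x ^ n).IsHaarMeasure :=
    Measure.isHaarMeasure_map_of_isFiniteMeasure μ (powMonoidHom n) hcont hn
  have : IsProbabilityMeasure (μ.map fun x : G => x ^ n) :=
    Measure.isProbabilityMeasure_map hcont.aemeasurable
  exact ⟨hcont.measurable, Measure.isHaarMeasure_eq_of_isProbabilityMeasure _ μ⟩

theorem integral_eq_zero_of_mul_left_eq_smul {G E : Type*} [Group G] [MeasurableSpace G]
    [MeasurableMul G] {μ : Measure G} [μ.IsMulLeftInvariant] [NormedAddCommGroup E]
    [NormedSpace ℂ E] {f : G → E} {g : G} {c : ℂ} (hc : c ≠ 1)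
    (hf : ∀ x, f (g * x) = c • f x) : ∫ x, f x ∂μ = 0 := by
  have hfix : c • ∫ x, f x ∂μ = ∫ x, f x ∂μ := by
    simp only [← integral_smul, ← hf, integral_mul_left_eq_self]
  have hzero : (c - 1) • ∫ x, f x ∂μ = 0 := by rw [sub_smul, one_smul, hfix, sub_self]
  exact (smul_eq_zero.mp hzero).resolve_left (sub_ne_zero.mpr hc)

section HaarCircle

variable {μ : Measure Circle} [μ.IsHaarMeasure] [IsProbabilityMeasure μ] {N : ℕ}

theorem integral_conj_pow_mul_pow_mul_comp_pow (hN : N ≠ 0) {g : Circle → ℂ}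
    (hg : AEStronglyMeasurable g μ) {k l : ℕ} (hk : k < N) (hl : l < N) :
    ∫ z, conj ((z : ℂ) ^ k) * (z : ℂ) ^ l * g (z ^ N) ∂μ = if k = l then ∫ w, g w ∂μ else 0 := by
  have hpow := measurePreserving_pow_of_surjective μ (Circle.pow_surjective hN)
  split_ifs with hkl
  · subst hkl
    have hunit : ∀ z : Circle, conj ((z : ℂ) ^ k) * (z : ℂ) ^ k = 1 := fun z => by
      rw [← Circle.coe_pow, ← Circle.coe_inv_eq_conj, ← Circle.coe_mul, inv_mul_cancel,
        Circle.coe_one]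
    simp only [hunit, one_mul]
    calc ∫ z, g (z ^ N) ∂μ = ∫ w, g w ∂(μ.map fun z : Circle => z ^ N) :=
          (integral_map hpow.aemeasurable (by rwa [hpow.map_eq])).symm
      _ = ∫ w, g w ∂μ := by rw [hpow.map_eq]
  · set ω := Circle.exp (2 * Real.pi / N)
    have hω : IsPrimitiveRoot ω N := Circle.isPrimitiveRoot_exp hN
    have hc : (((ω ^ k)⁻¹ * ω ^ l : Circle) : ℂ) = conj ((ω : ℂ) ^ k) * (ω : ℂ) ^ l := by
      rw [Circle.coe_mul, Circle.coe_inv_eq_conj, Circle.coe_pow, Circle.coe_pow]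
    refine integral_eq_zero_of_mul_left_eq_smul (g := ω)
      (c := conj ((ω : ℂ) ^ k) * (ω : ℂ) ^ l) ?_ fun z => ?_
    · rw [← hc, Ne, Circle.coe_eq_one, inv_mul_eq_one]
      exact fun h => hkl (hω.pow_inj hk hl h)
    · simp only [mul_pow, hω.pow_eq_one, one_mul, Circle.coe_mul, map_mul, smul_eq_mul]
      ring

theorem memLp_pow_mul_comp_pow (hN : N ≠ 0) {u : Circle → ℂ} {p : ENNReal} (hu : MemLp u p μ)
    (k : ℕ) : MemLp (fun z : Circle => (z : ℂ) ^ k * u (z ^ N)) p μ := by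
  have hpow := measurePreserving_pow_of_surjective μ (Circle.pow_surjective hN)
  refine (hu.comp_measurePreserving hpow).mul' (memLp_top_of_bound
    (by fun_prop : Continuous fun z : Circle => (z : ℂ) ^ k).aestronglyMeasurable 1
    (ae_of_all _ fun z => ?_))
  rw [norm_pow, Circle.norm_coe, one_pow]

theorem integral_conj_sum_pow_mul_comp_pow_mul_sum (hN : N ≠ 0) {u v : Fin N → Circle → ℂ}
    (hu : ∀ k, MemLp (u k) 2 μ) (hv : ∀ k, MemLp (v k) 2 μ) :
    ∫ z, conj (∑ k : Fin N, (z : ℂ) ^ (k : ℕ) * u k (z ^ N))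
        * ∑ l : Fin N, (z : ℂ) ^ (l : ℕ) * v l (z ^ N) ∂μ
      = ∑ k : Fin N, ∫ w, conj (u k w) * v k w ∂μ := by
  have hint : ∀ k l : Fin N, Integrable (fun z : Circle =>
      conj ((z : ℂ) ^ (k : ℕ) * u k (z ^ N)) * ((z : ℂ) ^ (l : ℕ) * v l (z ^ N))) μ :=
    fun k l => (memLp_pow_mul_comp_pow hN (hu k) k).star.integrable_mul
      (memLp_pow_mul_comp_pow hN (hv l) l)
  have horth : ∀ k l : Fin N,
      ∫ z, conj ((z : ℂ) ^ (k : ℕ) * u k (z ^ N)) * ((z : ℂ) ^ (l : ℕ) * v l (z ^ N)) ∂μ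
        = if (k : ℕ) = l then ∫ w, conj (u k w) * v l w ∂μ else 0 := fun k l => by
    rw [← integral_conj_pow_mul_pow_mul_comp_pow (g := fun w => conj (u k w) * v l w) hN
      ((hu k).star.integrable_mul (hv l)).aestronglyMeasurable k.isLt l.isLt]
    congr 1 with z
    simp only [map_mul]
    ring
  simp_rw [map_sum, Finset.sum_mul, Finset.mul_sum]
  rw [integral_finsetSum _ fun k _ => integrable_finsetSum _ fun l _ => hint k l]
  refine Finset.sum_congr rfl fun k _ => ?_
  rw [integral_finsetSum _ fun l _ => hint k l]
  simp only [horth, Fin.val_inj, Finset.sum_ite_eq, Finset.mem_univ, if_true]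

end HaarCircle

section MatrixEntries

open Matrix

variable {α m n : Type*} [Fintype n] [MeasurableSpace α] {μ : Measure α}
  {A : α → Matrix m n ℂ}

theorem memLp_top_mul_conjTranspose_apply (hA : ∀ a b, MemLp (fun z => A z a b) ⊤ μ) (a b : m) :
    MemLp (fun z => (A z * (A z)ᴴ) a b) ⊤ μ := by
  simp only [mul_apply, conjTranspose_apply]
  exact memLp_finsetSum _ fun k _ => (hA b k).star.mul' (hA a k) (r := ⊤)

theorem integral_conj_mul_conjTranspose_apply_mul (hA : ∀ a b, MemLp (fun z => A z a b) ⊤ μ)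
    {φ ψ : α → ℂ} (hφ : MemLp φ 2 μ) (hψ : MemLp ψ 2 μ) (a b : m) :
    ∫ w, conj ((A w * (A w)ᴴ) a b * φ w) * ψ w ∂μ
      = ∑ k, ∫ w, conj (A w a k * φ w) * (A w b k * ψ w) ∂μ := by
  refine (integral_congr_ae (Filter.Eventually.of_forall fun w => ?_)).trans
    (integral_finsetSum _ fun k _ => (hφ.mul' (hA a k) (r := 2)).star.integrable_mul
      (hψ.mul' (hA b k) (r := 2)))
  simp only [mul_apply, conjTranspose_apply, RCLike.star_def, map_mul, map_sum,
    Complex.conj_conj, Finset.sum_mul]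
  exact Finset.sum_congr rfl fun k _ => by ring

end MatrixEntries

open Matrix in
/-- If $m_i(z)=\sum_j A_{i,j}(z^N)z^j$ then $S_i^*S_j$ is multiplication by the
$(j,i)$ entry of $A(z)A(z)^*$. -/
theorem adjoint_comp_eq_loop_entry (N : ℕ) (hN : 2 ≤ N) (μ : Measure Circle)
    [μ.IsHaarMeasure] [IsProbabilityMeasure μ]
    (A : Circle → Matrix (Fin N) (Fin N) ℂ)
    (hA : ∀ i j, MemLp (fun z => A z i j) ⊤ μ)
    (m : Fin N → Circle → ℂ)
    (hm : ∀ (i : Fin N) (z : Circle), m i z = ∑ j : Fin N, A (z ^ N) i j * (z : ℂ) ^ (j : ℕ))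
    (S : Fin N → (Lp ℂ 2 μ →L[ℂ] Lp ℂ 2 μ))
    (hS : ∀ i (f : Lp ℂ 2 μ), (S i f : Circle → ℂ) =ᵐ[μ] fun z => m i z * f (z ^ N)) :
    ∀ (i j : Fin N) (f : Lp ℂ 2 μ),
      (ContinuousLinearMap.adjoint (S i) (S j f) : Circle → ℂ)
        =ᵐ[μ] fun z => (A z * (A z)ᴴ) j i * f z := by
  intro i j f
  have hS_sum : ∀ a (g : Lp ℂ 2 μ), (S a g : Circle → ℂ)
      =ᵐ[μ] fun z => ∑ k : Fin N, (z : ℂ) ^ (k : ℕ) * (A (z ^ N) a k * g (z ^ N)) := by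
    intro a g
    filter_upwards [hS a g] with z hz
    rw [hz, hm, Finset.sum_mul]
    exact Finset.sum_congr rfl fun k _ => by ring
  have hMf : MemLp (fun z => (A z * (A z)ᴴ) j i * f z) 2 μ :=
    (Lp.memLp f).mul' (memLp_top_mul_conjTranspose_apply hA j i)
  suffices (S i).adjoint (S j f) = hMf.toLp _ by rw [this]; exact hMf.coeFn_toLp
  refine ext_inner_right ℂ fun h => ?_
  rw [ContinuousLinearMap.adjoint_inner_left, L2.inner_def, L2.inner_def]
  calc _ = ∫ z, conj (∑ k : Fin N, (z : ℂ) ^ (k : ℕ) * (A (z ^ N) j k * f (z ^ N)))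
          * ∑ l : Fin N, (z : ℂ) ^ (l : ℕ) * (A (z ^ N) i l * h (z ^ N)) ∂μ := by
        refine integral_congr_ae ?_
        filter_upwards [hS_sum j f, hS_sum i h] with z hjf hih
        rw [RCLike.inner_apply, hjf, hih, mul_comm]
    _ = ∑ k : Fin N, ∫ w, conj (A w j k * f w) * (A w i k * h w) ∂μ :=
        integral_conj_sum_pow_mul_comp_pow_mul_sum (u := fun k w => A w j k * f w)
          (v := fun k w => A w i k * h w) (by omega)
          (fun k => (Lp.memLp f).mul' (hA j k)) (fun k => (Lp.memLp h).mul' (hA i k))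
    _ = ∫ w, conj ((A w * (A w)ᴴ) j i * f w) * h w ∂μ :=
        (integral_conj_mul_conjTranspose_apply_mul hA (Lp.memLp f) (Lp.memLp h) j i).symm
    _ = _ := by
        refine integral_congr_ae ?_
        filter_upwards [hMf.coeFn_toLp] with w hw
        rw [RCLike.inner_apply, hw, mul_comm]
end

section
/- If R and S are commuting positive bounded operators on a Hilbert space, then 0 ≤ R S R ≤ ‖R‖² S. Moreover, if S is a projection, the inequality R S R ≤ ‖R‖² S holds if and only if R and S commute. -/
/-!
If `a` is self-adjoint and commutes with `b ≥ 0`, then `‖a‖² b - a b a = (‖a‖² - a²) b` is a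
product of commuting nonnegative elements, hence nonnegative.

Conversely, if `p` is a projection and `a p a ≤ c p`, compressing by `1 - p` kills the right side
and gives `x⋆ x ≤ 0` for `x = p a (1 - p)`; so `x = 0`, i.e. `p a = p a p`, and taking adjoints
`a p = p a p = p a`.
-/

namespace IsSelfAdjoint

variable {A : Type*} [CStarAlgebra A] [PartialOrder A] [StarOrderedRing A] {a b p : A}

theorem conjugate_le_norm_sq_smul_of_commute (ha : IsSelfAdjoint a) (hb : 0 ≤ b)
    (hab : Commute a b) : a * b * a ≤ (‖a‖ ^ 2) • b := by
  have hsq : 0 ≤ algebraMap ℝ A (‖a‖ ^ 2) - a * a := by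
    simpa [ha.star_eq] using sub_nonneg.mpr (CStarAlgebra.star_mul_le_algebraMap_norm_sq (a := a))
  have hcomm : Commute (algebraMap ℝ A (‖a‖ ^ 2) - a * a) b :=
    (Algebra.commute_algebraMap_left _ _).sub_left (hab.mul_left hab)
  have hrw : (‖a‖ ^ 2) • b - a * b * a = (algebraMap ℝ A (‖a‖ ^ 2) - a * a) * b := by
    rw [sub_mul, Algebra.smul_def, mul_assoc, ← hab.eq, mul_assoc]
  exact sub_nonneg.mp (hrw ▸ hcomm.mul_nonneg hsq hb)

theorem commute_of_conjugate_le_smul (ha : IsSelfAdjoint a) (hp : IsStarProjection p) {c : ℝ}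
    (h : a * p * a ≤ c • p) : Commute a p := by
  have hq : IsStarProjection (1 - p) := hp.one_sub
  have hqp : (1 - p) * p = 0 := by rw [sub_mul, one_mul, hp.isIdempotentElem.eq, sub_self]
  have hstar : star (p * a * (1 - p)) * (p * a * (1 - p)) = (1 - p) * (a * p * a) * (1 - p) := by
    simp only [star_mul, ha.star_eq, hp.isSelfAdjoint.star_eq, hq.isSelfAdjoint.star_eq,
      mul_assoc, hp.isIdempotentElem.mul_self_mul]
  have hle : (1 - p) * (a * p * a) * (1 - p) ≤ 0 := by
    simpa [hqp] using hq.isSelfAdjoint.conjugate_le_conjugate h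
  have hzero : p * a * (1 - p) = 0 := by
    rw [← CStarRing.star_mul_self_eq_zero_iff, hstar]
    exact le_antisymm hle (hstar ▸ star_mul_self_nonneg _)
  have hpa : p * a = p * a * p := by
    rw [mul_sub, mul_one, sub_eq_zero] at hzero; exact hzero
  calc a * p = star (p * a) := by rw [star_mul, ha.star_eq, hp.isSelfAdjoint.star_eq]
    _ = p * a := by rw [hpa, star_mul, star_mul, ha.star_eq, hp.isSelfAdjoint.star_eq, mul_assoc]

end IsSelfAdjoint

open ContinuousLinearMap in
/-- If $R,S$ are commuting positive operators then $0\le RSR\le\|R\|^2S$; moreover,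
when $S$ is an (orthogonal) projection, $RSR\le\|R\|^2S$ holds iff $R$ and $S$ commute. -/
theorem commuting_positive_RSR {H : Type*} [NormedAddCommGroup H] [InnerProductSpace ℂ H]
    [CompleteSpace H] (R S : H →L[ℂ] H) (hR : R.IsPositive) (hS : S.IsPositive) :
    (Commute R S →
      (R * S * R).IsPositive ∧ ((‖R‖ ^ 2 : ℝ) • S - R * S * R).IsPositive) ∧
    (IsIdempotentElem S →
      (((‖R‖ ^ 2 : ℝ) • S - R * S * R).IsPositive ↔ Commute R S)) := by
  have hS₀ : 0 ≤ S := (nonneg_iff_isPositive S).mpr hS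
  have upper (hRS : Commute R S) : ((‖R‖ ^ 2 : ℝ) • S - R * S * R).IsPositive :=
    (nonneg_iff_isPositive _).mp <| sub_nonneg.mpr <|
      hR.isSelfAdjoint.conjugate_le_norm_sq_smul_of_commute hS₀ hRS
  refine ⟨fun hRS => ⟨(nonneg_iff_isPositive _).mp (hR.isSelfAdjoint.conjugate_nonneg hS₀),
    upper hRS⟩, fun hidem => ⟨fun hle => ?_, upper⟩⟩
  rw [← nonneg_iff_isPositive, sub_nonneg] at hle
  exact hR.isSelfAdjoint.commute_of_conjugate_le_smul ⟨hidem, hS.isSelfAdjoint⟩ hle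
end
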